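/- arXiv:1511.02020 — 2 statements merged into one kernel-verified Lean document; each statement's English description precedes it below -/
import Mathlib

section
/- Let 0<p<∞ and let φ:ℝⁿ×(0,∞)→(0,∞) satisfy: (i) φ(y,s)s^{n/p} ≤ φ(x,r)r^{n/p} whenever ‖x−y‖_∞ ≤ r−s, and (ii) φ(x,r) ≤ φ(x,s) for all x and 0<s≤r. Then φ satisfies the compatibility condition: for all x,y ∈ ℝⁿ and r>0 with ‖x−y‖_∞ ≤ r, one has 3^{−n/p} φ(y,r) ≤ φ(x,r) ≤ 3^{n/p} φ(y,r). -/
open MeasureTheory ENNReal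

noncomputable section

/-- Euclidean space `ℝⁿ`. -/
abbrev En (n : ℕ) := EuclideanSpace ℝ (Fin n)

/-- The axis-parallel closed cube with center `c` and side length `ℓ`. -/
def cube (n : ℕ) (c : En n) (ℓ : ℝ) : Set (En n) :=
  {y | ∀ i, |y i - c i| ≤ ℓ / 2}

/-- The generalized Morrey quasinorm (with exponent `p`) of an `ℝ≥0∞`-valued function. -/
def morrey (n : ℕ) (p : ℝ) (φ : En n → ℝ → ℝ) (g : En n → ℝ≥0∞) : ℝ≥0∞ :=
  ⨆ (c : En n) (ℓ : ℝ) (_ : 0 < ℓ),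
    (ENNReal.ofReal (φ c ℓ))⁻¹ *
      ((ENNReal.ofReal (ℓ ^ n))⁻¹ * ∫⁻ y in cube n c ℓ, g y ^ p) ^ (1 / p)

/-- The generalized Morrey quasinorm of a real-valued function. -/
def morreyR (n : ℕ) (p : ℝ) (φ : En n → ℝ → ℝ) (f : En n → ℝ) : ℝ≥0∞ :=
  morrey n p φ (fun y => ENNReal.ofReal |f y|)

/-- The generalized Morrey quasinorm of a complex-valued function. -/
def morreyC (n : ℕ) (p : ℝ) (φ : En n → ℝ → ℝ) (f : En n → ℂ) : ℝ≥0∞ :=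
  morrey n p φ (fun y => ENNReal.ofReal ‖f y‖)

/-- The generalized Morrey norm with exponent `q : ℝ≥0∞` (allowing `q = ∞`). -/
def morreyL (n : ℕ) (q : ℝ≥0∞) (φ : En n → ℝ → ℝ) (f : En n → ℝ) : ℝ≥0∞ :=
  ⨆ (c : En n) (ℓ : ℝ) (_ : 0 < ℓ),
    (ENNReal.ofReal (φ c ℓ))⁻¹ * (ENNReal.ofReal (ℓ ^ n)) ^ (-(1 / q).toReal) *
      eLpNorm f q (volume.restrict (cube n c ℓ))

/-- The weak generalized Morrey quasinorm. -/
def wMorrey (n : ℕ) (p : ℝ) (φ : En n → ℝ → ℝ) (g : En n → ℝ≥0∞) : ℝ≥0∞ :=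
  ⨆ (T : ℝ) (_ : 0 < T),
    ENNReal.ofReal T *
      morrey n p φ ({y | ENNReal.ofReal T < g y}.indicator fun _ => 1)

/-- The class `𝒢_p`, with explicit almost-increasing constant `C`. -/
def GClassC (n : ℕ) (p : ℝ) (φ : En n → ℝ → ℝ) (C : ℝ) : Prop :=
  (∀ x r, 0 < r → 0 < φ x r) ∧
  (∀ x s r, 0 < s → s ≤ r → φ x r ≤ φ x s) ∧
  (1 ≤ C ∧ ∀ x s r, 0 < s → s ≤ r →
    φ x s * s ^ ((n : ℝ) / p) ≤ C * (φ x r * r ^ ((n : ℝ) / p)))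

/-- The class `𝒢_p`. -/
def GClass (n : ℕ) (p : ℝ) (φ : En n → ℝ → ℝ) : Prop :=
  ∃ C, GClassC n p φ C

/-- The `ℓ_q` norm of a sequence of extended nonnegative reals. -/
def lqNorm (q : ℝ≥0∞) (a : ℕ → ℝ≥0∞) : ℝ≥0∞ :=
  if q = ⊤ then ⨆ j, a j else (∑' j, a j ^ q.toReal) ^ (1 / q.toReal)

/-- The Hardy-Littlewood maximal function (over cubes). -/
def hlM (n : ℕ) (f : En n → ℝ) (x : En n) : ℝ≥0∞ :=
  ⨆ (c : En n) (ℓ : ℝ) (_ : 0 < ℓ) (_ : x ∈ cube n c ℓ),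
    (ENNReal.ofReal (ℓ ^ n))⁻¹ * ∫⁻ y in cube n c ℓ, ENNReal.ofReal |f y|

/-- `ℓ^∞` distance on `ℝⁿ`. -/
def linf (n : ℕ) (x y : En n) : ℝ := ⨆ i, |x i - y i|

/-- Tempered distributions on `ℝⁿ`. -/
abbrev TempDist (n : ℕ) := SchwartzMap (En n) ℝ →L[ℝ] ℝ

/-- The Schwartz seminorm quantity `p_N`. -/
def pN (n N : ℕ) (ψ : SchwartzMap (En n) ℝ) : ℝ≥0∞ :=
  ∑ m ∈ Finset.range (N + 1),
    ⨆ x : En n, ENNReal.ofReal ((1 + ‖x‖) ^ N * ‖iteratedFDeriv ℝ m (⇑ψ) x‖)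

/-- The grand maximal function of a tempered distribution. -/
def grandMax (n N : ℕ) (f : TempDist n) (x : En n) : ℝ≥0∞ :=
  ⨆ (ψ : SchwartzMap (En n) ℝ) (_ : pN n N ψ ≤ 1) (t : ℝ) (_ : 0 < t)
    (η : SchwartzMap (En n) ℝ) (_ : ∀ y, η y = (t ^ n)⁻¹ * ψ (t⁻¹ • (x - y))),
    ENNReal.ofReal |f η|

/-- The generalized Hardy-Morrey quasinorm, via the grand maximal function. -/
def hMorrey (n : ℕ) (p : ℝ) (φ : En n → ℝ → ℝ) (N : ℕ) (f : TempDist n) : ℝ≥0∞ :=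
  morrey n p φ (grandMax n N f)

/-- The heat maximal function `sup_{t>0} |e^{tΔ}f|` of a tempered distribution. -/
def heatMax (n : ℕ) (f : TempDist n) (x : En n) : ℝ≥0∞ :=
  ⨆ (t : ℝ) (_ : 0 < t) (η : SchwartzMap (En n) ℝ)
    (_ : ∀ y, η y = (4 * Real.pi * t) ^ (-(n : ℝ) / 2) *
      Real.exp (-‖x - y‖ ^ 2 / (4 * t))),
    ENNReal.ofReal |f η|

/-- The Peetre maximal function. -/
def peetreMax (n : ℕ) (r d : ℝ) (f : En n → ℂ) (x : En n) : ℝ≥0∞ :=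
  ⨆ y : En n, ENNReal.ofReal (‖f (x - y)‖ / (1 + d * ‖y‖ ^ ((n : ℝ) / r)))

/-- The (distributional) Fourier transform of `f` is supported in `Ω`. -/
def ftSupportedIn (n : ℕ) (f : En n → ℂ) (Ω : Set (En n)) : Prop :=
  ∀ ψ : SchwartzMap (En n) ℂ, Disjoint (tsupport ⇑ψ) Ω →
    ∫ x, f x * (SchwartzMap.fourierTransformCLM ℂ ψ) x = 0

/-!
Moving the centre by at most `r` is absorbed by doubling the scale: condition (i) for the
cubes of sides `2r ⊇ r` gives `φ(y,r) r^{n/p} ≤ φ(x,2r) (2r)^{n/p}`, and (ii) bounds `φ(x,2r)`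
by `φ(x,r)`, so `φ(y,r) ≤ 2^{n/p} φ(x,r)`. Exchanging `x` and `y` gives the other inequality.
-/

theorem linf_comm (n : ℕ) (x y : En n) : linf n x y = linf n y x := by
  simp only [linf, abs_sub_comm]

theorem le_two_rpow_mul_of_dist_le {X : Type*} (d : X → X → ℝ) (φ : X → ℝ → ℝ) {a : ℝ}
    (h_shift : ∀ x y r s, 0 < r → 0 < s → d x y ≤ r - s → φ y s * s ^ a ≤ φ x r * r ^ a)
    (h_antitone : ∀ x s r, 0 < s → s ≤ r → φ x r ≤ φ x s)
    {x y : X} {r : ℝ} (hr : 0 < r) (hxy : d x y ≤ r) :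
    φ y r ≤ 2 ^ a * φ x r := by
  have hra : 0 < r ^ a := Real.rpow_pos_of_pos hr a
  refine le_of_mul_le_mul_right ?_ hra
  calc φ y r * r ^ a ≤ φ x (2 * r) * (2 * r) ^ a :=
        h_shift x y (2 * r) r (by linarith) hr (by linarith)
    _ ≤ φ x r * (2 ^ a * r ^ a) := by
        rw [Real.mul_rpow zero_le_two hr.le]
        exact mul_le_mul_of_nonneg_right (h_antitone x r (2 * r) hr (by linarith)) (by positivity)
    _ = 2 ^ a * φ x r * r ^ a := by ring

theorem statement6_general (n : ℕ) (p : ℝ) (hp : 0 < p)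
    (φ : En n → ℝ → ℝ) (hφpos : ∀ x r, 0 < r → 0 < φ x r)
    (hφ1 : ∀ x y r s, 0 < r → 0 < s → linf n x y ≤ r - s →
      φ y s * s ^ ((n : ℝ) / p) ≤ φ x r * r ^ ((n : ℝ) / p))
    (hφ2 : ∀ x s r, 0 < s → s ≤ r → φ x r ≤ φ x s) :
    ∀ (x y : En n) (r : ℝ), 0 < r → linf n x y ≤ r →
      (3 : ℝ) ^ (-(n : ℝ) / p) * φ y r ≤ φ x r ∧
      φ x r ≤ (3 : ℝ) ^ ((n : ℝ) / p) * φ y r := by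
  have h23 : (2 : ℝ) ^ ((n : ℝ) / p) ≤ 3 ^ ((n : ℝ) / p) :=
    Real.rpow_le_rpow zero_le_two (by norm_num) (by positivity)
  have shift_le : ∀ x y r, 0 < r → linf n x y ≤ r → φ y r ≤ 3 ^ ((n : ℝ) / p) * φ x r :=
    fun x y r hr hxy => (le_two_rpow_mul_of_dist_le (linf n) φ hφ1 hφ2 hr hxy).trans
      (mul_le_mul_of_nonneg_right h23 (hφpos x r hr).le)
  intro x y r hr hxy
  refine ⟨?_, shift_le y x r hr (by rwa [linf_comm])⟩
  rw [neg_div, Real.rpow_neg zero_le_three, inv_mul_le_iff₀ (by positivity)]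
  exact shift_le x y r hr hxy

theorem statement6 (n : ℕ) (hn : 0 < n) (p : ℝ) (hp : 0 < p)
    (φ : En n → ℝ → ℝ) (hφpos : ∀ x r, 0 < r → 0 < φ x r)
    (hφ1 : ∀ x y r s, 0 < r → 0 < s → linf n x y ≤ r - s →
      φ y s * s ^ ((n : ℝ) / p) ≤ φ x r * r ^ ((n : ℝ) / p))
    (hφ2 : ∀ x s r, 0 < s → s ≤ r → φ x r ≤ φ x s) :
    ∀ (x y : En n) (r : ℝ), 0 < r → linf n x y ≤ r →
      (3 : ℝ) ^ (-(n : ℝ) / p) * φ y r ≤ φ x r ∧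
      φ x r ≤ (3 : ℝ) ^ ((n : ℝ) / p) * φ y r :=
  statement6_general n p hp φ hφpos hφ1 hφ2

end
end

section
/- Let 0<p<∞ and let φ ∈ 𝒢_p additionally satisfy φ(y,s)s^{n/p} ≤ φ(x,r)r^{n/p} whenever ‖x−y‖_∞ ≤ r−s. Then there is a constant C (depending only on n, p, and the constant in the 𝒢_p condition) such that for every cube Q ⊂ ℝⁿ, 1/φ(Q) ≤ ‖χ_Q‖_{𝓜_{p,φ}} ≤ C/φ(Q), where φ(Q) = φ(c(Q),ℓ(Q)). -/
open MeasureTheory ENNReal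

noncomputable section

/-
Testing the supremum on `Q` itself gives the lower bound. If a cube `Q'` of side `ℓ'` meets
`Q`, then `|Q ∩ Q'| ≤ min(ℓ, ℓ')ⁿ` and the centres are `(ℓ + ℓ')/2`-close in `ℓ^∞`, so `Q` sits
well inside the cube with centre `c(Q')` and side `2 max(ℓ, ℓ')`. The hypothesis on `φ` and its
monotonicity then give `φ(Q) min(ℓ, ℓ')^{n/p} ≤ 2^{n/p} φ(Q') ℓ'^{n/p}`, i.e. `C = 2^{n/p}`.
-/

lemma cube_eq_preimage_pi (n : ℕ) (c : En n) (ℓ : ℝ) :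
    cube n c ℓ = (MeasurableEquiv.toLp 2 (Fin n → ℝ)).symm ⁻¹'
      Set.univ.pi fun i => Set.Icc (c i - ℓ / 2) (c i + ℓ / 2) := by
  ext y
  simp only [cube, Set.mem_ofPred_eq, Set.mem_preimage, Set.mem_univ_pi, Set.mem_Icc,
    MeasurableEquiv.coe_toLp_symm, abs_le]
  refine forall_congr' fun i => ?_
  constructor <;> rintro ⟨h₁, h₂⟩ <;> constructor <;> linarith

lemma measurableSet_cube (n : ℕ) (c : En n) (ℓ : ℝ) : MeasurableSet (cube n c ℓ) := by
  rw [cube_eq_preimage_pi]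
  exact (MeasurableSet.univ_pi fun _ => measurableSet_Icc).preimage (by fun_prop)

lemma volume_cube (n : ℕ) (c : En n) {ℓ : ℝ} (hℓ : 0 ≤ ℓ) :
    volume (cube n c ℓ) = ENNReal.ofReal (ℓ ^ n) := by
  rw [cube_eq_preimage_pi,
    (EuclideanSpace.volume_preserving_symm_measurableEquiv_toLp (Fin n)).measure_preimage
      (MeasurableSet.univ_pi fun _ => measurableSet_Icc).nullMeasurableSet,
    volume_pi_pi]
  simp only [Real.volume_Icc, add_sub_sub_cancel, add_halves, Finset.prod_const,
    Finset.card_univ, Fintype.card_fin, ENNReal.ofReal_pow hℓ]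

lemma volume_cube_inter_cube_le (n : ℕ) (c c' : En n) {ℓ ℓ' : ℝ} (hℓ : 0 ≤ ℓ) (hℓ' : 0 ≤ ℓ') :
    volume (cube n c ℓ ∩ cube n c' ℓ') ≤ ENNReal.ofReal (min ℓ ℓ' ^ n) := by
  rcases le_total ℓ ℓ' with h | h
  · rw [min_eq_left h, ← volume_cube n c hℓ]
    exact measure_mono Set.inter_subset_left
  · rw [min_eq_right h, ← volume_cube n c' hℓ']
    exact measure_mono Set.inter_subset_right

lemma linf_le_of_mem_cube {n : ℕ} {c c' z : En n} {ℓ ℓ' : ℝ} (hℓ : 0 ≤ ℓ) (hℓ' : 0 ≤ ℓ')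
    (hz : z ∈ cube n c ℓ) (hz' : z ∈ cube n c' ℓ') : linf n c' c ≤ (ℓ + ℓ') / 2 := by
  refine Real.iSup_le (fun i => ?_) (by positivity)
  calc |c' i - c i| ≤ |c' i - z i| + |z i - c i| := abs_sub_le _ _ _
    _ ≤ (ℓ + ℓ') / 2 := by linarith [hz i, hz' i, abs_sub_comm (c' i) (z i)]

lemma setLIntegral_ofReal_abs_indicator_one_rpow {X : Type*} [MeasurableSpace X] (μ : Measure X)
    {p : ℝ} (hp : 0 < p) {A : Set X} (hA : MeasurableSet A) (S : Set X) :
    ∫⁻ y in S, ENNReal.ofReal |A.indicator (fun _ => (1 : ℝ)) y| ^ p ∂μ = μ (A ∩ S) := by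
  have h : (fun y => ENNReal.ofReal |A.indicator (fun _ => (1 : ℝ)) y| ^ p) =
      A.indicator fun _ => 1 := by
    ext y
    by_cases hy : y ∈ A <;> simp [hy, ENNReal.zero_rpow_of_pos hp]
  rw [h, lintegral_indicator hA, setLIntegral_one, Measure.restrict_apply hA]

lemma inv_ofReal_mul_rpow_le_of_le {n : ℕ} {p ℓ m u v K : ℝ} {V : ℝ≥0∞} (hp : 0 < p)
    (hℓ : 0 < ℓ) (hm : 0 ≤ m) (hu : 0 < u) (hv : 0 < v) (hV : V ≤ ENNReal.ofReal (m ^ n))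
    (h : v * (m / ℓ) ^ ((n : ℝ) / p) ≤ K * u) :
    (ENNReal.ofReal u)⁻¹ * ((ENNReal.ofReal (ℓ ^ n))⁻¹ * V) ^ (1 / p) ≤
      ENNReal.ofReal K * (ENNReal.ofReal v)⁻¹ := by
  have hratio : (ENNReal.ofReal (ℓ ^ n))⁻¹ * V ≤ ENNReal.ofReal ((m / ℓ) ^ n) := by
    rw [div_pow, ENNReal.ofReal_div_of_pos (by positivity), ENNReal.div_eq_inv_mul]
    gcongr
  calc (ENNReal.ofReal u)⁻¹ * ((ENNReal.ofReal (ℓ ^ n))⁻¹ * V) ^ (1 / p)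
      ≤ (ENNReal.ofReal u)⁻¹ * ENNReal.ofReal ((m / ℓ) ^ ((n : ℝ) / p)) := by
        rw [div_eq_mul_one_div (n : ℝ), Real.rpow_natCast_mul (by positivity),
          ← ENNReal.ofReal_rpow_of_nonneg (by positivity) (by positivity)]
        gcongr
    _ ≤ ENNReal.ofReal K * (ENNReal.ofReal v)⁻¹ := by
        rw [← ENNReal.ofReal_inv_of_pos hu, ← ENNReal.ofReal_inv_of_pos hv,
          ← ENNReal.ofReal_mul (by positivity), ← ENNReal.ofReal_mul' (by positivity)]
        refine ENNReal.ofReal_le_ofReal ?_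
        rw [inv_mul_eq_div, ← div_eq_mul_inv, div_le_div_iff₀ hu hv]
        linarith

section Regularity

variable {n : ℕ} (φ : En n → ℝ → ℝ) {a : ℝ}
  (hmono : ∀ x s r, 0 < s → s ≤ r → φ x r ≤ φ x s)
  (htri : ∀ x y r s, 0 < r → 0 < s → linf n x y ≤ r - s → φ y s * s ^ a ≤ φ x r * r ^ a)
include hmono htri

lemma mul_rpow_le_of_linf_le {c c' : En n} {ℓ ℓ' : ℝ} (hℓ : 0 < ℓ) (hℓ' : 0 < ℓ')
    (h : linf n c' c ≤ (ℓ + ℓ') / 2) :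
    φ c ℓ * ℓ ^ a ≤ 2 ^ a * φ c' ℓ' * max ℓ ℓ' ^ a := by
  have hmax : 0 < max ℓ ℓ' := lt_max_of_lt_left hℓ
  calc φ c ℓ * ℓ ^ a ≤ φ c' (2 * max ℓ ℓ') * (2 * max ℓ ℓ') ^ a :=
        htri c' c _ ℓ (by positivity) hℓ (by linarith [le_max_left ℓ ℓ', le_max_right ℓ ℓ'])
    _ ≤ φ c' ℓ' * (2 * max ℓ ℓ') ^ a := by
        gcongr
        exact hmono c' ℓ' _ hℓ' (by linarith [le_max_right ℓ ℓ'])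
    _ = 2 ^ a * φ c' ℓ' * max ℓ ℓ' ^ a := by
        rw [Real.mul_rpow zero_le_two hmax.le]; ring

lemma mul_min_div_rpow_le_of_linf_le {c c' : En n} {ℓ ℓ' : ℝ} (hℓ : 0 < ℓ) (hℓ' : 0 < ℓ')
    (h : linf n c' c ≤ (ℓ + ℓ') / 2) :
    φ c ℓ * (min ℓ ℓ' / ℓ') ^ a ≤ 2 ^ a * φ c' ℓ' := by
  have hmin : 0 < min ℓ ℓ' := lt_min hℓ hℓ'
  have hprod : max ℓ ℓ' * (min ℓ ℓ' / (ℓ * ℓ')) = 1 := by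
    rw [mul_div_assoc', mul_comm, min_mul_max]
    exact div_self (by positivity)
  calc φ c ℓ * (min ℓ ℓ' / ℓ') ^ a = φ c ℓ * ℓ ^ a * (min ℓ ℓ' / (ℓ * ℓ')) ^ a := by
        rw [mul_assoc, ← Real.mul_rpow hℓ.le (by positivity)]
        congr 2
        field_simp
    _ ≤ 2 ^ a * φ c' ℓ' * max ℓ ℓ' ^ a * (min ℓ ℓ' / (ℓ * ℓ')) ^ a :=
        mul_le_mul_of_nonneg_right (mul_rpow_le_of_linf_le φ hmono htri hℓ hℓ' h) (by positivity)
    _ = 2 ^ a * φ c' ℓ' := by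
        rw [mul_assoc, ← Real.mul_rpow (by positivity) (by positivity), hprod, Real.one_rpow,
          mul_one]

end Regularity

theorem statement7_general (n : ℕ) (p : ℝ) (hp : 0 < p) (Cg : ℝ) :
    ∃ C : ℝ, 0 < C ∧
      ∀ φ : En n → ℝ → ℝ, GClassC n p φ Cg →
        (∀ x y r s, 0 < r → 0 < s → linf n x y ≤ r - s →
          φ y s * s ^ ((n : ℝ) / p) ≤ φ x r * r ^ ((n : ℝ) / p)) →
        ∀ (c : En n) (ℓ : ℝ), 0 < ℓ →
          (ENNReal.ofReal (φ c ℓ))⁻¹ ≤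
              morreyR n p φ ((cube n c ℓ).indicator fun _ => (1 : ℝ)) ∧
            morreyR n p φ ((cube n c ℓ).indicator fun _ => (1 : ℝ)) ≤
              ENNReal.ofReal C * (ENNReal.ofReal (φ c ℓ))⁻¹ := by
  refine ⟨2 ^ ((n : ℝ) / p), by positivity, ?_⟩
  rintro φ ⟨hpos, hmono, -⟩ htri c ℓ hℓ
  simp only [morreyR, morrey,
    setLIntegral_ofReal_abs_indicator_one_rpow volume hp (measurableSet_cube n c ℓ)]
  refine ⟨le_iSup₂_of_le c ℓ (le_iSup_of_le hℓ ?_), iSup₂_le fun c' ℓ' => iSup_le fun hℓ' => ?_⟩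
  · rw [Set.inter_self, volume_cube n c hℓ.le,
      ENNReal.inv_mul_cancel (by positivity) ENNReal.ofReal_ne_top, ENNReal.one_rpow, mul_one]
  obtain hempty | ⟨z, hz, hz'⟩ := (cube n c ℓ ∩ cube n c' ℓ').eq_empty_or_nonempty
  · simp [hempty, ENNReal.zero_rpow_of_pos, hp]
  exact inv_ofReal_mul_rpow_le_of_le hp hℓ' (le_min hℓ.le hℓ'.le) (hpos c' ℓ' hℓ') (hpos c ℓ hℓ)
    (volume_cube_inter_cube_le n c c' hℓ.le hℓ'.le)
    (mul_min_div_rpow_le_of_linf_le φ hmono htri hℓ hℓ' (linf_le_of_mem_cube hℓ.le hℓ'.le hz hz'))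

theorem statement7 (n : ℕ) (hn : 0 < n) (p : ℝ) (hp : 0 < p) (Cg : ℝ) :
    ∃ C : ℝ, 0 < C ∧
      ∀ φ : En n → ℝ → ℝ, GClassC n p φ Cg →
        (∀ x y r s, 0 < r → 0 < s → linf n x y ≤ r - s →
          φ y s * s ^ ((n : ℝ) / p) ≤ φ x r * r ^ ((n : ℝ) / p)) →
        ∀ (c : En n) (ℓ : ℝ), 0 < ℓ →
          (ENNReal.ofReal (φ c ℓ))⁻¹ ≤
              morreyR n p φ ((cube n c ℓ).indicator fun _ => (1 : ℝ)) ∧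
            morreyR n p φ ((cube n c ℓ).indicator fun _ => (1 : ℝ)) ≤
              ENNReal.ofReal C * (ENNReal.ofReal (φ c ℓ))⁻¹ :=
  statement7_general n p hp Cg

end
end
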